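/- For every real x, the second derivative f'' of the function f(x) := H₂(Q(x)) satisfies | f''(x) | ≤ (2/√(2π)) · (1 + |x|) · e^{−x²/2} + ( |x|³ / √(2π) ) · e^{−x²/2}. -/

import Mathlib

/-!
Write `φ = -Q'` for the standard normal density and `f = H₂ ∘ Q`. Since `H₂' = log ((1 - q) / q)`,
`f'' = x φ log ((1 - Q) / Q) - φ² / (Q (1 - Q))`, and `f` is even because `Q (-x) = 1 - Q x`
and `H₂ (1 - q) = H₂ q`. For `x ≥ 0` we have `Q ≤ 1/2`, so both terms are nonnegative and it
suffices to bound each by `φ (2 + 2x + x³)`. Both bounds come from the Mills-ratio inequality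
`Q x ≥ φ x / (1 + x)`: it gives `φ / Q ≤ 1 + x`, and `-log Q ≤ log √(2π) + x² / 2 + log (1 + x)`.
-/

/-- Binary entropy function with natural logarithm. -/
noncomputable def binH (q : ℝ) : ℝ := -q * Real.log q - (1 - q) * Real.log (1 - q)

/-- The standard Gaussian upper-tail function `Q(x) = ∫_x^∞ (1/√(2π)) e^{−t²/2} dt`. -/
noncomputable def gaussQ (x : ℝ) : ℝ :=
  ∫ t in Set.Ici x, (Real.sqrt (2 * Real.pi))⁻¹ * Real.exp (-t ^ 2 / 2)

open Real MeasureTheory Set Filter Topology ProbabilityTheory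

section EvenOdd

variable {𝕜 F : Type*} [NontriviallyNormedField 𝕜] [NormedAddCommGroup F] [NormedSpace 𝕜 F]
  {f : 𝕜 → F}

theorem Function.Even.deriv (hf : f.Even) : (deriv f).Odd := fun x => by
  have h := deriv_comp_neg f x
  simp only [hf.eq] at h
  rw [h, neg_neg]

theorem Function.Odd.deriv (hf : f.Odd) : (deriv f).Even := fun x => by
  have h := deriv_comp_neg f x
  simp only [hf.eq, deriv.fun_neg] at h
  exact (neg_inj.mp h).symm

end EvenOdd

local notation "φ" => gaussianPDFReal 0 1

lemma gaussianPDFReal_zero_one (t : ℝ) : φ t = (√(2 * π))⁻¹ * exp (-t ^ 2 / 2) := by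
  simp [gaussianPDFReal]

lemma gaussianPDFReal_zero_one_neg (t : ℝ) : φ (-t) = φ t := by
  simp [gaussianPDFReal_zero_one]

lemma gaussianPDFReal_zero_one_pos (t : ℝ) : 0 < φ t :=
  gaussianPDFReal_pos 0 1 t one_ne_zero

lemma hasDerivAt_gaussianPDFReal_zero_one (t : ℝ) : HasDerivAt φ (-t * φ t) t := by
  rw [show φ = fun t => (√(2 * π))⁻¹ * exp (-t ^ 2 / 2) from funext gaussianPDFReal_zero_one]
  have h : HasDerivAt (fun t : ℝ => -t ^ 2 / 2) (-t) t :=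
    ((hasDerivAt_pow 2 t).fun_neg.div_const 2).congr_deriv (by ring)
  exact (h.exp.const_mul _).congr_deriv (by ring)

lemma tendsto_gaussianPDFReal_zero_one_atTop : Tendsto φ atTop (𝓝 0) := by
  have h : Tendsto (fun t : ℝ => -t ^ 2 / 2) atTop atBot :=
    (tendsto_neg_atTop_atBot.comp (tendsto_pow_atTop two_ne_zero)).atBot_div_const two_pos
  rw [show φ = fun t => (√(2 * π))⁻¹ * exp (-t ^ 2 / 2) from funext gaussianPDFReal_zero_one]
  simpa using (tendsto_exp_atBot.comp h).const_mul (√(2 * π))⁻¹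

lemma gaussQ_eq_integral_Ioi (x : ℝ) : gaussQ x = ∫ t in Ioi x, φ t := by
  simp only [gaussQ, integral_Ici_eq_integral_Ioi, gaussianPDFReal_zero_one]

lemma gaussQ_eq_one_sub_integral_Iic (x : ℝ) : gaussQ x = 1 - ∫ t in Iic x, φ t := by
  rw [gaussQ_eq_integral_Ioi, ← integral_gaussianPDFReal_eq_one 0 one_ne_zero,
    ← intervalIntegral.integral_Iic_add_Ioi (integrable_gaussianPDFReal 0 1).integrableOn
      (integrable_gaussianPDFReal 0 1).integrableOn]
  ring

lemma gaussQ_neg (x : ℝ) : gaussQ (-x) = 1 - gaussQ x := by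
  rw [gaussQ_eq_integral_Ioi, ← integral_comp_neg_Iic, gaussQ_eq_one_sub_integral_Iic]
  simp only [gaussianPDFReal_zero_one_neg, sub_sub_cancel]

lemma hasDerivAt_gaussQ (x : ℝ) : HasDerivAt gaussQ (-φ x) x := by
  have hφ : Continuous φ := continuous_iff_continuousAt.2 fun t =>
    (hasDerivAt_gaussianPDFReal_zero_one t).continuousAt
  have hQ : gaussQ = fun y => 1 - ((∫ t in Iic 0, φ t) + ∫ t in (0 : ℝ)..y, φ t) := by
    funext y
    rw [gaussQ_eq_one_sub_integral_Iic, ← intervalIntegral.integral_Iic_sub_Iic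
      (integrable_gaussianPDFReal 0 1).integrableOn (integrable_gaussianPDFReal 0 1).integrableOn]
    ring
  rw [hQ]
  exact ((hφ.integral_hasStrictDerivAt 0 x).hasDerivAt.const_add _).const_sub 1

lemma gaussQ_antitone : Antitone gaussQ :=
  antitone_of_deriv_nonpos (fun x => (hasDerivAt_gaussQ x).differentiableAt) fun x => by
    rw [(hasDerivAt_gaussQ x).deriv, neg_nonpos]
    exact (gaussianPDFReal_zero_one_pos x).le

lemma gaussQ_zero : gaussQ 0 = 2⁻¹ := by
  have h := gaussQ_neg 0
  rw [neg_zero] at h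
  linarith

lemma gaussQ_le_half {x : ℝ} (hx : 0 ≤ x) : gaussQ x ≤ 2⁻¹ :=
  gaussQ_zero ▸ gaussQ_antitone hx

/-- Mills-ratio bound: `-φ t / (1 + t)` is a primitive of `g'`, and `0 ≤ g' ≤ φ` on `[0, ∞)`. -/
lemma gaussianPDFReal_div_one_add_le_gaussQ {x : ℝ} (hx : 0 ≤ x) : φ x / (1 + x) ≤ gaussQ x := by
  set g' : ℝ → ℝ := fun t => φ t * (1 + t + t ^ 2) / (1 + t) ^ 2
  have hderiv : ∀ t ∈ Ici x, HasDerivAt (fun t => -(φ t / (1 + t))) (g' t) t := by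
    intro t ht
    have ht0 : 1 + t ≠ 0 := by have := mem_Ici.mp ht; linarith
    refine ((hasDerivAt_gaussianPDFReal_zero_one t).div
      ((hasDerivAt_id t).const_add 1) ht0).neg.congr_deriv ?_
    simp only [g', id]
    field_simp
    ring
  have hg'_nonneg : ∀ t ∈ Ioi x, 0 ≤ g' t := fun t ht => by
    have : 0 ≤ t := hx.trans (mem_Ioi.mp ht).le
    have := gaussianPDFReal_zero_one_pos t
    positivity
  have hlim : Tendsto (fun t => -(φ t / (1 + t))) atTop (𝓝 0) := by
    simpa using (tendsto_gaussianPDFReal_zero_one_atTop.div_atTop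
      (tendsto_atTop_add_const_left _ 1 tendsto_id)).neg
  have hint := integral_Ioi_of_hasDerivAt_of_nonneg' hderiv hg'_nonneg hlim
  rw [zero_sub, neg_neg] at hint
  rw [← hint, gaussQ_eq_integral_Ioi]
  refine setIntegral_mono_on (integrableOn_Ioi_deriv_of_nonneg' hderiv hg'_nonneg hlim)
    (integrable_gaussianPDFReal 0 1).integrableOn measurableSet_Ioi fun t ht => ?_
  have ht : 0 ≤ t := hx.trans (mem_Ioi.mp ht).le
  have := gaussianPDFReal_zero_one_pos t
  rw [div_le_iff₀ (by positivity)]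
  gcongr
  nlinarith

lemma gaussQ_pos (x : ℝ) : 0 < gaussQ x := by
  rcases le_total 0 x with hx | hx
  · have := gaussianPDFReal_zero_one_pos x
    exact (div_pos this (by linarith)).trans_le (gaussianPDFReal_div_one_add_le_gaussQ hx)
  · exact (gaussQ_zero ▸ (by norm_num) : 0 < gaussQ 0).trans_le (gaussQ_antitone hx)

lemma gaussQ_lt_one (x : ℝ) : gaussQ x < 1 := by
  have := gaussQ_pos (-x)
  rw [gaussQ_neg] at this
  linarith

lemma binH_eq_binEntropy : binH = binEntropy := by
  funext q
  simp only [binH, binEntropy, log_inv]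
  ring

lemma hasDerivAt_log_one_sub_gaussQ_sub_log_gaussQ (x : ℝ) :
    HasDerivAt (fun y => log (1 - gaussQ y) - log (gaussQ y))
      (φ x / (gaussQ x * (1 - gaussQ x))) x := by
  have hQ := hasDerivAt_gaussQ x
  have h0 := (gaussQ_pos x).ne'
  have h1 : 1 - gaussQ x ≠ 0 := (sub_pos.2 (gaussQ_lt_one x)).ne'
  refine ((hQ.const_sub 1).log h1).sub (hQ.log h0) |>.congr_deriv ?_
  field_simp
  ring

lemma hasDerivAt_binH_gaussQ (x : ℝ) :
    HasDerivAt (fun y => binH (gaussQ y))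
      (-(φ x * (log (1 - gaussQ x) - log (gaussQ x)))) x := by
  rw [binH_eq_binEntropy]
  exact ((hasDerivAt_binEntropy (gaussQ_pos x).ne' (gaussQ_lt_one x).ne).comp x
    (hasDerivAt_gaussQ x)).congr_deriv (by ring)

lemma deriv_deriv_binH_gaussQ (x : ℝ) :
    deriv (deriv fun y => binH (gaussQ y)) x
      = x * φ x * (log (1 - gaussQ x) - log (gaussQ x))
        - φ x ^ 2 / (gaussQ x * (1 - gaussQ x)) := by
  rw [funext fun y => (hasDerivAt_binH_gaussQ y).deriv]
  refine ((hasDerivAt_gaussianPDFReal_zero_one x).mul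
    (hasDerivAt_log_one_sub_gaussQ_sub_log_gaussQ x)).neg.deriv.trans ?_
  ring

lemma even_binH_gaussQ : (fun y => binH (gaussQ y)).Even := fun y => by
  simp only [gaussQ_neg, binH_eq_binEntropy, binEntropy_one_sub]

lemma log_sqrt_two_pi_le_two : log √(2 * π) ≤ 2 := by
  have hsqrt : √(2 * π) ≤ 3 := by
    rw [sqrt_le_left (by norm_num)]
    linarith [pi_le_four]
  linarith [log_le_sub_one_of_pos (by positivity : 0 < √(2 * π))]

lemma neg_log_gaussQ_le {x : ℝ} (hx : 0 ≤ x) : -log (gaussQ x) ≤ 2 + x + x ^ 2 / 2 := by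
  have hφ := gaussianPDFReal_zero_one_pos x
  have hlogφ : log (φ x) = -log √(2 * π) - x ^ 2 / 2 := by
    rw [gaussianPDFReal_zero_one, log_mul (by positivity) (exp_pos _).ne', log_inv, log_exp]
    ring
  have hlog1x : log (1 + x) ≤ x := by
    linarith [log_le_sub_one_of_pos (by linarith : 0 < 1 + x)]
  have hmono := log_le_log (div_pos hφ (by linarith)) (gaussianPDFReal_div_one_add_le_gaussQ hx)
  rw [log_div hφ.ne' (by linarith), hlogφ] at hmono
  linarith [log_sqrt_two_pi_le_two]

lemma abs_deriv_deriv_binH_gaussQ_le {x : ℝ} (hx : 0 ≤ x) :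
    |deriv (deriv fun y => binH (gaussQ y)) x| ≤ φ x * (2 + 2 * x + x ^ 3) := by
  rw [deriv_deriv_binH_gaussQ]
  have hp := gaussianPDFReal_zero_one_pos x
  have hQ0 := gaussQ_pos x
  have hQhalf := gaussQ_le_half hx
  have hmills := gaussianPDFReal_div_one_add_le_gaussQ hx
  set Q := gaussQ x
  set p := φ x
  have hlogodds_nonneg : 0 ≤ log (1 - Q) - log Q := sub_nonneg.2 (log_le_log hQ0 (by linarith))
  have hlogodds_le : log (1 - Q) - log Q ≤ 2 + x + x ^ 2 / 2 := by
    linarith [log_nonpos (by linarith : 0 ≤ 1 - Q) (by linarith : 1 - Q ≤ 1), neg_log_gaussQ_le hx]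
  have hdiv : p / (Q * (1 - Q)) ≤ 2 + 2 * x := by
    rw [div_le_iff₀ (by nlinarith)]
    rw [div_le_iff₀ (by linarith)] at hmills
    nlinarith
  apply abs_sub_le_of_nonneg_of_le
  · positivity
  · have hpoly : x * (2 + x + x ^ 2 / 2) ≤ 2 + 2 * x + x ^ 3 := by
      nlinarith [mul_nonneg hx (sq_nonneg (x - 4 / 3))]
    calc x * p * (log (1 - Q) - log Q) ≤ x * p * (2 + x + x ^ 2 / 2) := by gcongr
      _ = p * (x * (2 + x + x ^ 2 / 2)) := by ring
      _ ≤ p * (2 + 2 * x + x ^ 3) := by gcongr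
  · have : 0 < 1 - Q := by linarith
    positivity
  · calc p ^ 2 / (Q * (1 - Q)) = p * (p / (Q * (1 - Q))) := by ring
      _ ≤ p * (2 + 2 * x) := by gcongr
      _ ≤ p * (2 + 2 * x + x ^ 3) := by
        gcongr p * ?_
        exact le_add_of_nonneg_right (by positivity)

theorem entropy_Q_deriv2_bound (x : ℝ) :
    |deriv (deriv fun y => binH (gaussQ y)) x|
      ≤ 2 / Real.sqrt (2 * Real.pi) * (1 + |x|) * Real.exp (-x ^ 2 / 2)
        + |x| ^ 3 / Real.sqrt (2 * Real.pi) * Real.exp (-x ^ 2 / 2) := by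
  have habs : deriv (deriv fun y => binH (gaussQ y)) |x|
      = deriv (deriv fun y => binH (gaussQ y)) x := by
    rcases abs_choice x with h | h <;> rw [h]
    exact even_binH_gaussQ.deriv.deriv x
  calc _ ≤ φ |x| * (2 + 2 * |x| + |x| ^ 3) :=
        habs ▸ abs_deriv_deriv_binH_gaussQ_le (abs_nonneg x)
    _ = _ := by
        rw [gaussianPDFReal_zero_one, sq_abs]
        ring
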